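/- arXiv:2406.18497 — 8 statements merged into one kernel-verified Lean document; each statement's English description precedes it below -/
import Mathlib

section
/- Let D and E be categories such that D has pushouts and E has pullbacks. Let F, L : D ⥤ E be functors with right adjoints R, U : E ⥤ D respectively (adjunctions F ⊣ R and L ⊣ U), let α : F ⟶ L be a natural transformation, and let α' : U ⟶ R be its conjugate (mate) under these adjunctions. Then for every morphism ℓ : A ⟶ B in D and every morphism e : Y ⟶ X in E, the Leibniz pushout application α▫ℓ : F B ⊔_{F A} L A ⟶ L B has the left lifting property against e if and only if ℓ has the left lifting property against the Leibniz pullback application α'▫e : U Y ⟶ U X ×_{R X} R Y. -/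
/-!
A square from `α▫ℓ` to `e` is, by the universal property of the pushout, a triple
`(a : F B ⟶ Y, b : L A ⟶ Y, v : L B ⟶ X)` subject to three equations, and a lift is a map
`L B ⟶ Y` satisfying three more. Transposing everything along `F ⊣ R` and `L ⊣ U` turns these,
equation by equation, into the data of a square from `ℓ` to `α'▫e` (described by the universal
property of the pullback) and of its lifts; the equations involving `α` are exchanged with those
involving `α'` because transposition intertwines precomposition with `α` and postcomposition
with `α'`.
-/

open CategoryTheory Limits

namespace CategoryTheory

lemma Adjunction.homEquiv_comp_conjugateEquiv_app {C D : Type*} [Category C] [Category D]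
    {L₁ L₂ : C ⥤ D} {R₁ R₂ : D ⥤ C} (adj₁ : L₁ ⊣ R₁) (adj₂ : L₂ ⊣ R₂) (α : L₁ ⟶ L₂)
    {c : C} {d : D} (g : L₂.obj c ⟶ d) :
    adj₂.homEquiv c d g ≫ (conjugateEquiv adj₂ adj₁ α).app d =
      adj₁.homEquiv c d (α.app c ≫ g) := by
  rw [Adjunction.homEquiv_unit, Adjunction.homEquiv_unit, Category.assoc,
    (conjugateEquiv adj₂ adj₁ α).naturality g, ← Category.assoc,
    unit_conjugateEquiv adj₂ adj₁ α c, Category.assoc, R₁.map_comp]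

section Corner

variable {C : Type*} [Category C]

lemma hasLiftingProperty_pushout_desc_iff {P Q S T Y X : C} {f : P ⟶ Q} {g : P ⟶ S}
    {h : Q ⟶ T} {k : S ⟶ T} (w : f ≫ h = g ≫ k) [HasPushout f g] (e : Y ⟶ X) :
    HasLiftingProperty (pushout.desc h k w) e ↔
      ∀ (a : Q ⟶ Y) (b : S ⟶ Y) (v : T ⟶ X), f ≫ a = g ≫ b → a ≫ e = h ≫ v →
        b ≫ e = k ≫ v → ∃ φ : T ⟶ Y, h ≫ φ = a ∧ k ≫ φ = b ∧ φ ≫ e = v := by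
  constructor
  · intro _ a b v hab ha hb
    have sq : CommSq (pushout.desc a b hab) (pushout.desc h k w) e v :=
      ⟨pushout.hom_ext (by simp [pushout.inl_desc_assoc, ha])
        (by simp [pushout.inr_desc_assoc, hb])⟩
    exact ⟨sq.lift,
      by simpa only [pushout.inl_desc_assoc, pushout.inl_desc] using pushout.inl f g ≫= sq.fac_left,
      by simpa only [pushout.inr_desc_assoc, pushout.inr_desc] using pushout.inr f g ≫= sq.fac_left,
      sq.fac_right⟩
  · intro H
    refine ⟨fun {u v} sq => ?_⟩
    obtain ⟨φ, ha, hb, hv⟩ := H (pushout.inl f g ≫ u) (pushout.inr f g ≫ u) v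
      (by simp [pushout.condition_assoc])
      (by simpa [pushout.inl_desc_assoc] using pushout.inl f g ≫= sq.w)
      (by simpa [pushout.inr_desc_assoc] using pushout.inr f g ≫= sq.w)
    exact ⟨⟨⟨φ, pushout.hom_ext (by simpa [pushout.inl_desc_assoc] using ha)
      (by simpa [pushout.inr_desc_assoc] using hb), hv⟩⟩⟩

lemma hasLiftingProperty_pullback_lift_iff {A B P Q S T : C} {f : P ⟶ Q} {g : S ⟶ Q}
    {h : T ⟶ P} {k : T ⟶ S} (w : h ≫ f = k ≫ g) [HasPullback f g] (ℓ : A ⟶ B) :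
    HasLiftingProperty ℓ (pullback.lift h k w) ↔
      ∀ (b : A ⟶ T) (v₁ : B ⟶ P) (v₂ : B ⟶ S), v₁ ≫ f = v₂ ≫ g → b ≫ h = ℓ ≫ v₁ →
        b ≫ k = ℓ ≫ v₂ → ∃ ψ : B ⟶ T, ℓ ≫ ψ = b ∧ ψ ≫ h = v₁ ∧ ψ ≫ k = v₂ := by
  constructor
  · intro _ b v₁ v₂ hv h₁ h₂
    have sq : CommSq b ℓ (pullback.lift h k w) (pullback.lift v₁ v₂ hv) :=
      ⟨pullback.hom_ext (by simp [pullback.lift_fst, h₁]) (by simp [pullback.lift_snd, h₂])⟩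
    exact ⟨sq.lift, sq.fac_left,
      by simpa only [Category.assoc, pullback.lift_fst] using sq.fac_right =≫ pullback.fst f g,
      by simpa only [Category.assoc, pullback.lift_snd] using sq.fac_right =≫ pullback.snd f g⟩
  · intro H
    refine ⟨fun {u v} sq => ?_⟩
    obtain ⟨ψ, hu, h₁, h₂⟩ := H u (v ≫ pullback.fst f g) (v ≫ pullback.snd f g)
      (by simp [pullback.condition])
      (by simpa [pullback.lift_fst] using sq.w =≫ pullback.fst f g)
      (by simpa [pullback.lift_snd] using sq.w =≫ pullback.snd f g)
    exact ⟨⟨⟨ψ, hu, pullback.hom_ext (by simpa [pullback.lift_fst] using h₁)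
      (by simpa [pullback.lift_snd] using h₂)⟩⟩⟩

end Corner

lemma leibniz_lifting_conditions_iff {D E : Type*} [Category D] [Category E]
    {F L : D ⥤ E} {R U : E ⥤ D} (adj₁ : F ⊣ R) (adj₂ : L ⊣ U) (α : F ⟶ L)
    {A B : D} (ℓ : A ⟶ B) {Y X : E} (e : Y ⟶ X) :
    (∀ (a : F.obj B ⟶ Y) (b : L.obj A ⟶ Y) (v : L.obj B ⟶ X), F.map ℓ ≫ a = α.app A ≫ b →
      a ≫ e = α.app B ≫ v → b ≫ e = L.map ℓ ≫ v →
        ∃ φ, α.app B ≫ φ = a ∧ L.map ℓ ≫ φ = b ∧ φ ≫ e = v) ↔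
    (∀ (b : A ⟶ U.obj Y) (v₁ : B ⟶ U.obj X) (v₂ : B ⟶ R.obj Y),
      v₁ ≫ (conjugateEquiv adj₂ adj₁ α).app X = v₂ ≫ R.map e → b ≫ U.map e = ℓ ≫ v₁ →
        b ≫ (conjugateEquiv adj₂ adj₁ α).app Y = ℓ ≫ v₂ →
          ∃ ψ, ℓ ≫ ψ = b ∧ ψ ≫ U.map e = v₁ ∧ ψ ≫ (conjugateEquiv adj₂ adj₁ α).app Y = v₂) := by
  refine Iff.trans ?_ ⟨fun H b v₁ v₂ => H v₂ b v₁, fun H v₂ b v₁ => H b v₁ v₂⟩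
  refine (adj₁.homEquiv B Y).forall_congr fun a => (adj₂.homEquiv A Y).forall_congr fun b =>
    (adj₂.homEquiv B X).forall_congr fun v => ?_
  rw [(adj₂.homEquiv B Y).symm.exists_congr_left]
  simp only [Equiv.symm_symm, Adjunction.homEquiv_comp_conjugateEquiv_app,
    ← Adjunction.homEquiv_naturality_left, ← Adjunction.homEquiv_naturality_right,
    Equiv.apply_eq_iff_eq]
  exact ⟨fun H hv hb ha => (H ha.symm hv.symm hb).imp fun _ ⟨ha, hb, hv⟩ => ⟨hb, hv, ha⟩,
    fun H ha hv hb => (H hv.symm hb ha.symm).imp fun _ ⟨hb, hv, ha⟩ => ⟨ha, hb, hv⟩⟩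

end CategoryTheory

/-- Let `D` have pushouts (in the codomain of `F, L`) and pullbacks (in the
codomain of `R, U`).  Given adjunctions `F ⊣ R` and `L ⊣ U`, a natural transformation
`α : F ⟶ L` and its conjugate (mate) `α' : U ⟶ R`, a morphism `ℓ : A ⟶ B` of `D` and a
morphism `e : Y ⟶ X` of `E`, the Leibniz pushout application
`α▫ℓ : F B ⊔_{F A} L A ⟶ L B` has the left lifting property against `e` if and only if `ℓ`
has the left lifting property against the Leibniz pullback application
`α'▫e : U Y ⟶ U X ×_{R X} R Y`. -/
theorem leibniz_application_transposition
    {D E : Type*} [Category D] [Category E] [HasPushouts E] [HasPullbacks D]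
    {F L : D ⥤ E} {R U : E ⥤ D}
    (adj₁ : F ⊣ R) (adj₂ : L ⊣ U) (α : F ⟶ L)
    {A B : D} (ℓ : A ⟶ B) {Y X : E} (e : Y ⟶ X) :
    HasLiftingProperty
        (pushout.desc (α.app B) (L.map ℓ) (α.naturality ℓ) :
          pushout (F.map ℓ) (α.app A) ⟶ L.obj B) e ↔
      HasLiftingProperty ℓ
        (pullback.lift (U.map e) ((conjugateEquiv adj₂ adj₁ α).app Y)
            ((conjugateEquiv adj₂ adj₁ α).naturality e) :
          U.obj Y ⟶ pullback ((conjugateEquiv adj₂ adj₁ α).app X) (R.map e)) := by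
  rw [hasLiftingProperty_pushout_desc_iff, hasLiftingProperty_pullback_lift_iff]
  exact leibniz_lifting_conditions_iff adj₁ adj₂ α ℓ e
end

section
/- Let E be a finitely complete category with a subobject classifier, and let G be a groupoid. Then the functor category G ⥤ E has a subobject classifier, given by the constant functor at the subobject classifier of E together with the constant truth morphism. Moreover, for any functor F : G ⥤ H between groupoids, the restriction functor F* : (H ⥤ E) ⥤ (G ⥤ E) (precomposition with F) sends a subobject classifier of H ⥤ E to a subobject classifier of G ⥤ E. -/
open CategoryTheory Limits

/-- A morphism `t : T ⟶ Ω` out of a terminal object `T` is a *subobject classifier* if it is a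
monomorphism and every monomorphism `m : U ⟶ X` arises as the pullback of `t` along a unique
morphism `χ : X ⟶ Ω`. -/
structure CategoryTheory.IsSubobjectClassifier {C : Type*} [Category C] {T Ω : C}
    (hT : IsTerminal T) (t : T ⟶ Ω) : Prop where
  mono : Mono t
  classifies : ∀ {U X : C} (m : U ⟶ X) [Mono m],
    ∃! χ : X ⟶ Ω, IsPullback m (hT.from U) χ t

/-!
Over a groupoid, a natural transformation whose components are subobject classifiers is itself one:
since every arrow `u` is invertible, the naturality squares of a mono `m` and of `t` along `u` are
pullbacks, so both composites around the naturality square of the componentwise characteristic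
maps classify the same component of `m`, and hence agree. This gives the constant classifier. As
subobject classifiers are unique up to isomorphism, every classifier of `H ⥤ E` is componentwise
isomorphic to the constant one, so its restriction along `F` again has classifier components.
-/

namespace CategoryTheory.IsSubobjectClassifier

section

variable {C : Type*} [Category C] {T Ω : C} {hT : IsTerminal T} {t : T ⟶ Ω}

noncomputable def toClassifier (h : IsSubobjectClassifier hT t) : Subobject.Classifier C :=
  have := h.mono
  Subobject.Classifier.mkOfTerminalΩ₀ T hT Ω t (fun m _ => (h.classifies m).choose)
    (fun m _ => (h.classifies m).choose_spec.1) (fun m _ _ hχ => (h.classifies m).unique hχ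
      (h.classifies m).choose_spec.1)

lemma of_classifier (c : Subobject.Classifier C) (hΩ₀ : IsTerminal c.Ω₀) :
    IsSubobjectClassifier hΩ₀ c.truth where
  mono := c.mono_truth
  classifies {U _} m _ := ⟨c.χ m, hΩ₀.hom_ext (c.χ₀ U) (hΩ₀.from U) ▸ c.isPullback m,
    fun _ hχ => c.uniq m hχ⟩

lemma of_iso (h : IsSubobjectClassifier hT t) {T' Ω' : C} (hT' : IsTerminal T') {t' : T' ⟶ Ω'}
    (e : Arrow.mk t ≅ Arrow.mk t') : IsSubobjectClassifier hT' t' :=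
  of_classifier (h.toClassifier.ofIso (Comma.rightIso e) (Comma.leftIso e)
    hT'.from t' (Iso.eq_inv_comp _ |>.mpr (Arrow.w_mk e.hom))) hT'

noncomputable def uniqueUpToIso (h : IsSubobjectClassifier hT t) {T' Ω' : C}
    {hT' : IsTerminal T'} {t' : T' ⟶ Ω'} (h' : IsSubobjectClassifier hT' t') :
    Arrow.mk t ≅ Arrow.mk t' :=
  Arrow.isoMk (hT.uniqueUpToIso hT') (h.toClassifier.uniqueUpToIso h'.toClassifier)
    (h.toClassifier.truth_comp_hom (𝒞₂ := h'.toClassifier)).symm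

end

section

variable {K E : Type*} [Groupoid K] [Category E] [HasPullbacks E]

lemma of_forall_app {T Ω : K ⥤ E} (hT : IsTerminal T) {t : T ⟶ Ω}
    (hTk : ∀ k, IsTerminal (T.obj k)) (ht : ∀ k, IsSubobjectClassifier (hTk k) (t.app k)) :
    IsSubobjectClassifier hT t := by
  have from_app (U : K ⥤ E) (k : K) : (hT.from U).app k = (hTk k).from (U.obj k) :=
    (hTk k).hom_ext _ _
  have := fun k => (ht k).mono
  refine ⟨NatTrans.mono_of_mono_app t, fun {U X} m _ => ?_⟩
  choose χ hχ huniq using fun k => (ht k).classifies (m.app k)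
  have naturality {k k' : K} (u : k ⟶ k') : X.map u ≫ χ k' = χ k ≫ Ω.map u := by
    have hmu : IsPullback (m.app k) (U.map u) (X.map u) (m.app k') :=
      IsPullback.of_vert_isIso ⟨(m.naturality u).symm⟩
    have htu : IsPullback (t.app k) (T.map u) (Ω.map u) (t.app k') :=
      IsPullback.of_vert_isIso ⟨(t.naturality u).symm⟩
    have h₁ := hmu.paste_vert (hχ k')
    have h₂ := (hχ k).paste_vert htu
    rw [(hTk k').hom_ext (U.map u ≫ _) ((hTk k').from _)] at h₁
    rw [(hTk k').hom_ext ((hTk k).from _ ≫ _) ((hTk k').from _)] at h₂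
    exact ((ht k').classifies (m.app k)).unique h₁ h₂
  refine ⟨{ app := χ, naturality := fun _ _ u => naturality u }, ?_, fun χ' hχ' => ?_⟩
  · exact IsPullback.of_forall_isPullback_app fun k => from_app U k ▸ hχ k
  · ext k
    exact huniq k _ (from_app U k ▸ hχ'.app k)

variable {T Ω : E} {hT : IsTerminal T} {t : T ⟶ Ω}

lemma const (ht : IsSubobjectClassifier hT t) :
    IsSubobjectClassifier (Functor.isTerminalConst K hT) ((Functor.const K).map t) :=
  of_forall_app _ (fun _ => hT) (fun _ => ht)

lemma exists_app (ht : IsSubobjectClassifier hT t) {T' Ω' : K ⥤ E} {hT' : IsTerminal T'}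
    {t' : T' ⟶ Ω'} (h' : IsSubobjectClassifier hT' t') (k : K) :
    ∃ hTk : IsTerminal (T'.obj k), IsSubobjectClassifier hTk (t'.app k) :=
  let e : Arrow.mk t ≅ Arrow.mk (t'.app k) :=
    ((evaluation K E).obj k).mapArrow.mapIso ((const ht).uniqueUpToIso h')
  ⟨hT.ofIso (Comma.leftIso e), ht.of_iso _ e⟩

end

end CategoryTheory.IsSubobjectClassifier

/-- Let `E` be a finitely complete category with a subobject classifier
`t : T ⟶ Ω`, and let `G`, `H` be groupoids.  Then the functor category `G ⥤ E` has a subobject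
classifier, given by the constant functor at `Ω` together with the constant truth morphism;
moreover, for any functor `F : G ⥤ H`, restriction along `F` (precomposition) sends any
subobject classifier of `H ⥤ E` to a subobject classifier of `G ⥤ E`. -/
theorem functorCategory_subobjectClassifier
    {E : Type*} [Category E] [HasFiniteLimits E]
    {G H : Type*} [Groupoid G] [Groupoid H]
    {T Ω : E} (hT : IsTerminal T) (t : T ⟶ Ω)
    (ht : CategoryTheory.IsSubobjectClassifier hT t) (F : G ⥤ H) :
    (∃ hT' : IsTerminal ((Functor.const G).obj T),
        CategoryTheory.IsSubobjectClassifier hT' ((Functor.const G).map t)) ∧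
      ∀ {T' Ω' : H ⥤ E} (hT' : IsTerminal T') (t' : T' ⟶ Ω'),
        CategoryTheory.IsSubobjectClassifier hT' t' →
          ∃ hT'' : IsTerminal (F ⋙ T'),
            CategoryTheory.IsSubobjectClassifier hT'' (Functor.whiskerLeft F t') := by
  refine ⟨⟨_, ht.const⟩, fun hT' t' h' => ?_⟩
  choose hTk hclassifier using fun g => ht.exists_app h' (F.obj g)
  exact ⟨Functor.isTerminal hTk, IsSubobjectClassifier.of_forall_app _ hTk hclassifier⟩
end

section
/- Let E be a category with a terminal object 1, pullbacks, and a subobject classifier ⊤ : 1 ⟶ Ω, and let C be any category. In the functor category C ⥤ E, a natural transformation m : Y ⟶ X arises as a pullback of the constant natural transformation Δ⊤ : Δ1 ⟶ ΔΩ along some morphism X ⟶ ΔΩ if and only if m is a componentwise monomorphism and a cartesian natural transformation; moreover, in that case the classifying morphism X ⟶ ΔΩ is unique. In other words, Δ⊤ : Δ1 ⟶ ΔΩ classifies exactly those monomorphisms of C ⥤ E that are cartesian natural transformations. -/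
/-!
Δt is cartesian (its naturality squares are identity squares), and pullbacks of cartesian
transformations are cartesian (Mathlib's `NatTrans.Equifibered`, up to flipping the squares),
so every pullback of Δt is a cartesian componentwise mono. Conversely, the classifying maps of
the components of a cartesian mono `m` are natural, because the classifying map of a pullback
of a mono is the composite of the pulling-back map with the classifying map of that mono;
together they form a map `X ⟶ ΔΩ` along which `m` is the pullback of Δt, since pullbacks in
`C ⥤ E` are computed pointwise. Uniqueness is also checked pointwise.
-/

open CategoryTheory Limits

namespace CategoryTheory.NatTrans.Equifibered

variable {J D : Type*} [Category J] [Category D]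

theorem const_map {A B : D} (t : A ⟶ B) : Equifibered ((Functor.const J).map t) :=
  fun _ _ _ => IsPullback.of_id_fst

theorem of_isPullback [HasPullbacks D] {P F G H : J ⥤ D} {m : P ⟶ F} {u : P ⟶ G}
    {χ : F ⟶ H} {β : G ⟶ H} (h : IsPullback m u χ β) (hβ : Equifibered β) :
    Equifibered m := by
  intro i j f
  have outer := (h.app i).flip.paste_horiz (hβ f)
  rw [← u.naturality, ← χ.naturality] at outer
  exact outer.of_right (m.naturality f) (h.app j).flip

end CategoryTheory.NatTrans.Equifibered

namespace CategoryTheory.IsSubobjectClassifier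

variable {E : Type*} [Category E] {T Ω : E} {hT : IsTerminal T} {t : T ⟶ Ω}

noncomputable def χ (ht : IsSubobjectClassifier hT t) {U X : E} (m : U ⟶ X) [Mono m] :
    X ⟶ Ω :=
  (ht.classifies m).exists.choose

theorem isPullback_χ (ht : IsSubobjectClassifier hT t) {U X : E} (m : U ⟶ X) [Mono m] :
    IsPullback m (hT.from U) (ht.χ m) t :=
  (ht.classifies m).exists.choose_spec

theorem eq_χ_of_isPullback (ht : IsSubobjectClassifier hT t) {U X : E} {m : U ⟶ X} [Mono m]
    {u : U ⟶ T} {χ : X ⟶ Ω} (h : IsPullback m u χ t) : χ = ht.χ m := by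
  rw [hT.hom_ext u (hT.from U)] at h
  exact (ht.classifies m).unique h (ht.isPullback_χ m)

theorem χ_eq_comp_of_isPullback (ht : IsSubobjectClassifier hT t) {U' X' U X : E}
    {m' : U' ⟶ X'} {g : U' ⟶ U} {f : X' ⟶ X} {m : U ⟶ X} [Mono m'] [Mono m]
    (h : IsPullback m' g f m) : ht.χ m' = f ≫ ht.χ m :=
  (ht.eq_χ_of_isPullback (h.paste_vert (ht.isPullback_χ m))).symm

variable {C : Type*} [Category C]

noncomputable def constχ (ht : IsSubobjectClassifier hT t) {X Y : C ⥤ E} (m : Y ⟶ X)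
    [∀ c, Mono (m.app c)] (hm : NatTrans.Equifibered m) : X ⟶ (Functor.const C).obj Ω where
  app c := ht.χ (m.app c)
  naturality _ _ f := by
    simpa using (ht.χ_eq_comp_of_isPullback (hm f).flip).symm

theorem isPullback_constχ (ht : IsSubobjectClassifier hT t) {X Y : C ⥤ E} (m : Y ⟶ X)
    [∀ c, Mono (m.app c)] (hm : NatTrans.Equifibered m) :
    IsPullback m ((Functor.isTerminalConst C hT).from Y) (ht.constχ m hm)
      ((Functor.const C).map t) :=
  .of_forall_isPullback_app fun c => ht.isPullback_χ (m.app c)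

end CategoryTheory.IsSubobjectClassifier

/-- Let `E` be a category with a terminal object, pullbacks and a subobject
classifier `t : T ⟶ Ω`, and let `C` be any category.  A natural transformation `m : Y ⟶ X` in
`C ⥤ E` arises as a pullback of the constant transformation `Δt : ΔT ⟶ ΔΩ` along some morphism
`X ⟶ ΔΩ` if and only if `m` is a componentwise monomorphism and a cartesian natural
transformation (all naturality squares of `m` are pullbacks); moreover the classifying
morphism is then unique. -/
theorem const_classifier_classifies_cartesian_monos
    {C : Type*} [Category C] {E : Type*} [Category E] [HasPullbacks E]
    {T Ω : E} (hT : IsTerminal T) (t : T ⟶ Ω)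
    (ht : CategoryTheory.IsSubobjectClassifier hT t)
    {X Y : C ⥤ E} (m : Y ⟶ X) :
    ((∃ (χ : X ⟶ (Functor.const C).obj Ω) (u : Y ⟶ (Functor.const C).obj T),
        IsPullback m u χ ((Functor.const C).map t)) ↔
      (∀ c : C, Mono (m.app c)) ∧
        ∀ {c c' : C} (f : c ⟶ c'),
          IsPullback (m.app c) (Y.map f) (X.map f) (m.app c')) ∧
      ∀ χ₁ χ₂ : X ⟶ (Functor.const C).obj Ω,
        (∃ u, IsPullback m u χ₁ ((Functor.const C).map t)) →
        (∃ u, IsPullback m u χ₂ ((Functor.const C).map t)) → χ₁ = χ₂ := by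
  have := ht.mono
  refine ⟨⟨?_, ?_⟩, ?_⟩
  · rintro ⟨χ, u, h⟩
    have hm := (NatTrans.Equifibered.const_map t).of_isPullback h
    exact ⟨fun c => (h.app c).mono_fst_of_mono, fun f => (hm f).flip⟩
  · rintro ⟨_, hcart⟩
    exact ⟨_, _, ht.isPullback_constχ m fun _ _ f => (hcart f).flip⟩
  · rintro χ₁ χ₂ ⟨u₁, h₁⟩ ⟨u₂, h₂⟩
    ext c
    have := (h₁.app c).mono_fst_of_mono
    rw [ht.eq_χ_of_isPullback (h₁.app c), ht.eq_χ_of_isPullback (h₂.app c)]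
end

section
/- Let E be a category with pullbacks, let C ⊣ P be an adjoint pair of endofunctors of E, let ε : C ⟶ 𝟭 be a natural transformation, and let ε' : 𝟭 ⟶ P be its conjugate (mate) under the adjunction C ⊣ P. For an object X of E, define C_X : E/X ⥤ E/X on the slice category by sending an object g : Y ⟶ X to the object ε_X ∘ C g : C Y ⟶ X, and define P_X : E/X ⥤ E/X by sending an object h : Z ⟶ X to the projection X ×_{P X} P Z ⟶ X of the pullback of P h : P Z ⟶ P X along ε'_X : X ⟶ P X. Then C_X is left adjoint to P_X. -/
/-!
`C_X` factors as `Over.post C` followed by `Over.map ε_X`, and the mate identity says that `ε_X`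
is the transpose of `ε'_X` under `C ⊣ P`. For transposes `e : C X ⟶ Y` and `u : X ⟶ P Y`, the
functor `Over.post C ⋙ Over.map e` is the composite `Over.map u ⋙ Over.post C ⋙ Over.map counit_Y`
of two left adjoints, with right adjoint `Over.post P ⋙ Over.pullback u`. For `u = ε'_X` that
right adjoint is `P_X`, up to the symmetry of pullbacks.
-/

open CategoryTheory Limits

namespace Stmt7

variable {E : Type*} [Category E] [HasPullbacks E]

/-- The functor `C_X : E/X ⥤ E/X` induced on the slice over `X` by an endofunctor `C` with a
natural transformation `ε : C ⟶ 𝟭 E`: it sends `g : Y ⟶ X` to `ε_X ∘ C g : C Y ⟶ X`. -/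
@[simps]
def sliceCylinder (C : E ⥤ E) (ε : C ⟶ 𝟭 E) (X : E) : Over X ⥤ Over X where
  obj g := Over.mk (C.map g.hom ≫ ε.app X)
  map {g g'} f := Over.homMk (C.map f.left) (by
    dsimp
    rw [← Category.assoc, ← C.map_comp, Over.w f])
  map_id g := by
    ext
    simp
  map_comp f f' := by
    ext
    simp

/-- The functor `P_X : E/X ⥤ E/X` induced on the slice over `X` by an endofunctor `P` with a
natural transformation `ε' : 𝟭 E ⟶ P`: it sends `h : Z ⟶ X` to the projection
`X ×_{P X} P Z ⟶ X` of the pullback of `P h` along `ε'_X`. -/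
@[simps]
noncomputable def sliceCocylinder (P : E ⥤ E) (ε' : 𝟭 E ⟶ P) (X : E) : Over X ⥤ Over X where
  obj h := Over.mk (pullback.fst (ε'.app X) (P.map h.hom))
  map {h h'} f := Over.homMk
    (pullback.map (ε'.app X) (P.map h.hom) (ε'.app X) (P.map h'.hom)
      (𝟙 X) (P.map f.left) (𝟙 (P.obj X)) (by simp)
      (by rw [← P.map_comp, Over.w f, Category.comp_id]))
    (by exact (pullback.lift_fst _ _ _).trans (Category.comp_id _))
  map_id h := by
    apply Over.OverMorphism.ext
    apply pullback.hom_ext <;> simp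
  map_comp f f' := by
    apply Over.OverMorphism.ext
    apply pullback.hom_ext <;> simp only [pullback.map, Category.assoc, pullback.lift_fst, pullback.lift_snd, pullback.lift_fst_assoc, pullback.lift_snd_assoc, Functor.map_comp, Over.comp_left, Over.homMk_left]
    exact congrArg (pullback.fst _ _ ≫ ·) (Category.id_comp (𝟙 X)).symm

end Stmt7

namespace CategoryTheory

theorem conjugateEquiv_id_adjunction {E : Type*} [Category E] {C P : E ⥤ E} (adj : C ⊣ P)
    (ε : C ⟶ 𝟭 E) (X : E) :
    (conjugateEquiv Adjunction.id adj ε).app X = adj.homEquiv X X (ε.app X) := by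
  simp [Adjunction.homEquiv_unit]

theorem Limits.pullback_lift_comp_pullbackSymmetry_hom {E : Type*} [Category E] [HasPullbacks E]
    {X Y Y' Z : E} {u : X ⟶ Z} {a : Y ⟶ Z} {b : Y' ⟶ Z} (k : Y ⟶ Y') (hk : k ≫ b = a) :
    pullback.lift (pullback.fst a u ≫ k) (pullback.snd a u) (by simp [hk, pullback.condition]) ≫
        (pullbackSymmetry b u).hom =
      (pullbackSymmetry a u).hom ≫ pullback.map u a u b (𝟙 X) k (𝟙 Z) (by simp) (by simp [hk]) := by
  apply pullback.hom_ext <;> simp [pullback.lift_fst, pullback.lift_snd, pullback.map]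

noncomputable def Over.postMapAdjunction {C D : Type*} [Category C] [Category D] [HasPullbacks C]
    {L : C ⥤ D} {R : D ⥤ C} (adj : L ⊣ R) {X : C} {Y : D} {e : L.obj X ⟶ Y} {u : X ⟶ R.obj Y}
    (h : adj.homEquiv X Y e = u) :
    post L ⋙ map e ⊣ post R ⋙ pullback u := by
  subst h
  refine ((mapPullbackAdj _).comp (postAdjunctionRight adj)).ofNatIsoLeft <|
    NatIso.ofComponents (fun g ↦ isoMk (.refl _) ?_) fun _ ↦ ?_
  · change 𝟙 _ ≫ L.map g.hom ≫ e = L.map (g.hom ≫ adj.homEquiv X Y e) ≫ adj.counit.app Y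
    simp [Adjunction.homEquiv_unit]
  · ext
    exact (Category.comp_id _).trans (Category.id_comp _).symm

end CategoryTheory

noncomputable def Stmt7.postCompPullbackIsoSliceCocylinder {E : Type*} [Category E]
    [HasPullbacks E] (P : E ⥤ E) (ε' : 𝟭 E ⟶ P) (X : E) :
    Over.post P ⋙ Over.pullback (ε'.app X) ≅ sliceCocylinder P ε' X :=
  NatIso.ofComponents (fun h ↦ Over.isoMk (pullbackSymmetry _ _) (pullbackSymmetry_hom_comp_fst _ _))
    fun f ↦ by
      ext
      exact pullback_lift_comp_pullbackSymmetry_hom _ (Over.w ((Over.post P).map f))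

/-- Let `E` be a category with pullbacks, `C ⊣ P` an adjoint pair of
endofunctors of `E`, `ε : C ⟶ 𝟭` a natural transformation and `ε' : 𝟭 ⟶ P` its conjugate
(mate).  For any object `X`, the induced functor `C_X` on the slice `E/X` (sending
`g : Y ⟶ X` to `ε_X ∘ C g`) is left adjoint to the induced functor `P_X` (sending `h : Z ⟶ X`
to the pullback of `P h` along `ε'_X`). -/
theorem slice_cylinder_adjunction
    {E : Type*} [Category E] [HasPullbacks E]
    (C P : E ⥤ E) (adj : C ⊣ P) (ε : C ⟶ 𝟭 E) (X : E) :
    Nonempty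
      (Stmt7.sliceCylinder C ε X ⊣
        Stmt7.sliceCocylinder P (conjugateEquiv Adjunction.id adj ε) X) :=
  ⟨(Over.postMapAdjunction adj (conjugateEquiv_id_adjunction adj ε X).symm).ofNatIsoRight
    (Stmt7.postCompPullbackIsoSliceCocylinder P _ X)⟩
end

section
/- Let C be a small category with binary products. Then for every object c of C, the representable presheaf y(c) is tiny in the category of presheaves on C: the exponential functor X ↦ X^{y(c)} on Cᵒᵖ ⥤ Type admits a right adjoint. Indeed X^{y(c)} is naturally isomorphic to the restriction of X along the functor c × (−), so the right adjoint is given by right Kan extension along that functor. -/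
/-!
Since `y` preserves binary products, `y(c) × y(−) ≅ y(c × −)`; as `y(c) × (−)` preserves colimits
(presheaves are cartesian closed), it is therefore the left Kan extension along `y` of
`y ∘ (c × −)`, i.e. `Lan_{(c × −)ᵒᵖ}`. Its right adjoint `(−)^{y(c)}` is then restriction along
`(c × −)ᵒᵖ`, which has the right Kan extension `Ran_{(c × −)ᵒᵖ}` as a right adjoint.
-/

open CategoryTheory Limits

/-- An object `A` of a category with binary products is *tiny* if the exponential functor
`X ↦ X^A`, i.e. the right adjoint of the product functor `(−) × A`, itself admits a right
adjoint (equivalently, is a left adjoint). -/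
def CategoryTheory.IsTiny {C : Type*} [Category C] [HasBinaryProducts C] (A : C) : Prop :=
  ∃ expA : C ⥤ C, Nonempty (prod.functor.obj A ⊣ expA) ∧ expA.IsLeftAdjoint

universe u

namespace CategoryTheory

noncomputable def ihom.prodAdjunction {D : Type*} [Category D] [CartesianMonoidalCategory D]
    [HasBinaryProducts D] (A : D) [Closed A] : prod.functor.obj A ⊣ ihom A :=
  (ihom.adjunction A).ofNatIsoLeft (CartesianMonoidalCategory.tensorLeftIsoProd A)

theorem isTiny_of_isLeftAdjoint_ihom {D : Type*} [Category D] [CartesianMonoidalCategory D]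
    [HasBinaryProducts D] (A : D) [Closed A] [(ihom A).IsLeftAdjoint] : IsTiny A :=
  ⟨ihom A, ⟨ihom.prodAdjunction A⟩, inferInstance⟩

variable {C D : Type u} [SmallCategory C] [SmallCategory D]

noncomputable def Functor.opLanIsoOfCompYonedaIso (F : C ⥤ D)
    (L : (Cᵒᵖ ⥤ Type u) ⥤ (Dᵒᵖ ⥤ Type u)) [PreservesColimitsOfSize.{u, u} L]
    (e : F ⋙ yoneda ≅ yoneda ⋙ L) : F.op.lan ≅ L :=
  let eLan := Presheaf.compULiftYonedaIsoULiftYonedaCompLan.{u} F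
  let eL : F ⋙ uliftYoneda.{u} ≅ uliftYoneda.{u} ⋙ L :=
    Functor.isoWhiskerLeft F uliftYonedaIsoYoneda ≪≫ e ≪≫
      Functor.isoWhiskerRight uliftYonedaIsoYoneda.symm L
  have := (F.op.lanAdjunction (Type u)).leftAdjoint_preservesColimits
  have := Presheaf.isLeftKanExtension_of_preservesColimits.{u, u, u, u, u + 1} L eL
  have := Presheaf.isLeftKanExtension_of_preservesColimits.{u, u, u, u, u + 1} F.op.lan eLan
  Functor.leftKanExtensionUnique _ eLan.hom _ eL.hom

instance Functor.isLeftAdjoint_whiskeringLeft_obj (F : C ⥤ D) :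
    ((Functor.whiskeringLeft Cᵒᵖ Dᵒᵖ (Type u)).obj F.op).IsLeftAdjoint :=
  ⟨_, ⟨F.op.ranAdjunction (Type u)⟩⟩

variable [HasBinaryProducts C]

noncomputable def prodYonedaAdjunction (c : C) :
    prod.functor.obj (yoneda.obj c) ⊣
      (Functor.whiskeringLeft Cᵒᵖ Cᵒᵖ (Type u)).obj (prod.functor.obj c).op :=
  ((prod.functor.obj c).op.lanAdjunction (Type u)).ofNatIsoLeft
    ((prod.functor.obj c).opLanIsoOfCompYonedaIso _ (prodComparisonNatIso yoneda c))

noncomputable def ihomYonedaIsoWhiskeringLeft (c : C) :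
    ihom (yoneda.obj c) ≅ (Functor.whiskeringLeft Cᵒᵖ Cᵒᵖ (Type u)).obj (prod.functor.obj c).op :=
  (ihom.prodAdjunction _).rightAdjointUniq (prodYonedaAdjunction c)

end CategoryTheory

/-- Let `C` be a small category with binary products.  Then every
representable presheaf `y(c)` is tiny in `Cᵒᵖ ⥤ Type`: the exponential functor
`X ↦ X^{y(c)}` admits a right adjoint.  Indeed, `X^{y(c)}` is naturally isomorphic to the
restriction of `X` along the functor `c × (−)`. -/
theorem representable_presheaf_tiny
    {C : Type u} [SmallCategory C] [HasBinaryProducts C] (c : C) :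
    CategoryTheory.IsTiny (yoneda.obj c) ∧
      Nonempty
        (ihom (yoneda.obj c) ≅
          (Functor.whiskeringLeft Cᵒᵖ Cᵒᵖ (Type u)).obj (prod.functor.obj c).op) :=
  have : (ihom (yoneda.obj c)).IsLeftAdjoint :=
    Functor.isLeftAdjoint_of_iso (ihomYonedaIsoWhiskeringLeft c).symm
  ⟨isTiny_of_isLeftAdjoint_ihom _, ⟨ihomYonedaIsoWhiskeringLeft c⟩⟩
end

section
/- Let E be a category with binary products and pullbacks, let P be an endofunctor of E equipped with natural transformations ε : 𝟭 ⟶ P and δ : P ⟶ 𝟭 satisfying δ ∘ ε = id, and let (s, t : R ⟶ X, r : X ⟶ R) be a reflexive relation on an object X. If the canonical map ⟨⟨P s, P t⟩, δ_R⟩ : P R ⟶ (P X × P X) ×_{X × X} R into the pullback of ⟨s, t⟩ : R ⟶ X × X along δ_X × δ_X : P X × P X ⟶ X × X admits a section, then the reflexive relation R admits a δ-contractor. -/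
open CategoryTheory Limits

/-!
Contract a point `p : P X` onto the pair `(p, ε (δ p))` lying over the reflexivity witness
`r (δ p)`: this is a point of the pullback, and the given section lifts it to `P R`.
-/

lemma exists_lift_of_section_pullbackLift {C : Type*} [Category C]
    {A T Y W Z : C} {u : Y ⟶ Z} {v : W ⟶ Z} [HasPullback u v] {a : A ⟶ Y} {b : A ⟶ W} {hab : a ≫ u = b ≫ v}
    {σ : pullback u v ⟶ A} (hσ : σ ≫ pullback.lift a b hab = 𝟙 _)
    (x : T ⟶ Y) (y : T ⟶ W) (hxy : x ≫ u = y ≫ v) :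
    ∃ c : T ⟶ A, c ≫ a = x ∧ c ≫ b = y := by
  have hc : (pullback.lift x y hxy ≫ σ) ≫ pullback.lift a b hab = pullback.lift x y hxy := by
    rw [Category.assoc, hσ, Category.comp_id]
  refine ⟨pullback.lift x y hxy ≫ σ, ?_, ?_⟩
  · simpa only [Category.assoc, pullback.lift_fst] using hc =≫ pullback.fst u v
  · simpa only [Category.assoc, pullback.lift_snd] using hc =≫ pullback.snd u v

/-- Let `E` have binary products and pullbacks, let `P` be an endofunctor
with `ε : 𝟭 ⟶ P`, `δ : P ⟶ 𝟭` satisfying `δ ∘ ε = id`, and let `(s, t : R ⟶ X, r)` be a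
reflexive relation on `X`.  If the canonical map `⟨⟨P s, P t⟩, δ_R⟩` from `P R` into the
pullback of `⟨s, t⟩ : R ⟶ X × X` along `δ_X × δ_X` admits a section, then `R` admits a
`δ`-contractor: a morphism `c : P X ⟶ P R` with `P s ∘ c = id`, `P t ∘ c = ε_X ∘ δ_X` and
`δ_R ∘ c = r ∘ δ_X`. -/
theorem delta_contractor_of_section
    {E : Type*} [Category E] [HasBinaryProducts E] [HasPullbacks E]
    (P : E ⥤ E) (ε : 𝟭 E ⟶ P) (δ : P ⟶ 𝟭 E) (hεδ : ε ≫ δ = 𝟙 (𝟭 E))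
    {R X : E} (s t : R ⟶ X) (r : X ⟶ R)
    (hs : r ≫ s = 𝟙 X) (ht : r ≫ t = 𝟙 X)
    (hsec : ∃ σ : pullback (prod.map (δ.app X) (δ.app X)) (prod.lift s t) ⟶ P.obj R,
      σ ≫ (pullback.lift (prod.lift (P.map s) (P.map t)) (δ.app R)
        (by
          apply Limits.prod.hom_ext <;>
            simp [NatTrans.naturality]) :
        P.obj R ⟶ pullback (prod.map (δ.app X) (δ.app X)) (prod.lift s t)) = 𝟙 _) :
    ∃ c : P.obj X ⟶ P.obj R,
      c ≫ P.map s = 𝟙 (P.obj X) ∧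
      c ≫ P.map t = δ.app X ≫ ε.app X ∧
      c ≫ δ.app R = δ.app X ≫ r := by
  obtain ⟨σ, hσ⟩ := hsec
  have hεδX : ε.app X ≫ δ.app X = 𝟙 X := congr_app hεδ X
  have hover : prod.lift (𝟙 (P.obj X)) (δ.app X ≫ ε.app X) ≫ prod.map (δ.app X) (δ.app X) =
      (δ.app X ≫ r) ≫ prod.lift s t := by
    ext <;> simp [hεδX, hs, ht]
  obtain ⟨c, hcst, hcδ⟩ := exists_lift_of_section_pullbackLift hσ _ _ hover
  refine ⟨c, ?_, ?_, hcδ⟩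
  · simpa only [Category.assoc, prod.lift_fst] using hcst =≫ prod.fst
  · simpa only [Category.assoc, prod.lift_snd] using hcst =≫ prod.snd
end

section
/- Let E be a category with pullbacks, let P be an endofunctor of E equipped with natural transformations ε : 𝟭 ⟶ P and δ : P ⟶ 𝟭 satisfying δ ∘ ε = id, and let (s, t : R ⟶ X, r : X ⟶ R) be a reflexive relation on X admitting a δ-contractor. Form the pullback P X ×_X R of δ_X : P X ⟶ X along t : R ⟶ X. Then the morphism δ_X : P X ⟶ X is a retract, in the arrow category of E, of the canonical morphism ⟨P t, δ_R⟩ : P R ⟶ P X ×_X R. In particular, the square from ⟨P t, δ_R⟩ to δ_X with components P s : P R ⟶ P X and s ∘ pr_R : P X ×_X R ⟶ X is a split epimorphism in the arrow category. -/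
/-! The contractor `c` and the map `⟨ε_X, r⟩ : X ⟶ P X ×_X R` form a square from `δ_X` to
`⟨P t, δ_R⟩`: its two components over `P X ×_X R` are the contractor equations for `P t` and
`δ_R`. Followed by the square `(P s, s ∘ pr_R)` it gives the identity of `δ_X`, because
`P s ∘ c = id` and `s ∘ r = id`. -/

open CategoryTheory Limits

namespace CategoryTheory

variable {E : Type*} [Category E] [HasPullbacks E] (P : E ⥤ E) (δ : P ⟶ 𝟭 E) {R X : E}
  (s t : R ⟶ X)

noncomputable abbrev pullbackLiftMapApp : P.obj R ⟶ pullback (δ.app X) t :=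
  pullback.lift (P.map t) (δ.app R) (δ.naturality t)

noncomputable def pullbackLiftMapAppToApp :
    Arrow.mk (pullbackLiftMapApp P δ t) ⟶ Arrow.mk (δ.app X) :=
  Arrow.homMk (u := P.map s) (v := pullback.snd (δ.app X) t ≫ s) (by
    simp only [Arrow.mk_hom, pullback.lift_snd_assoc]
    exact δ.naturality s)

variable {P δ s t} {ε : 𝟭 E ⟶ P} (hεδ : ε ≫ δ = 𝟙 (𝟭 E)) {r : X ⟶ R} (ht : r ≫ t = 𝟙 X)
  {c : P.obj X ⟶ P.obj R} (hc₂ : c ≫ P.map t = δ.app X ≫ ε.app X)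
  (hc₃ : c ≫ δ.app R = δ.app X ≫ r)

noncomputable def appToPullbackLiftMapApp :
    Arrow.mk (δ.app X) ⟶ Arrow.mk (pullbackLiftMapApp P δ t) :=
  Arrow.homMk (u := c)
    (v := pullback.lift (ε.app X) r (by rw [← NatTrans.comp_app, hεδ, ht]; rfl))
    (by
      apply pullback.hom_ext
      · simp only [Arrow.mk_hom, Category.assoc]
        erw [pullback.lift_fst, pullback.lift_fst]
        exact hc₂
      · simp only [Arrow.mk_hom, Category.assoc]
        erw [pullback.lift_snd, pullback.lift_snd]
        exact hc₃)

noncomputable def retractPullbackLiftMapApp (hs : r ≫ s = 𝟙 X)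
    (hc₁ : c ≫ P.map s = 𝟙 (P.obj X)) :
    Retract (Arrow.mk (δ.app X)) (Arrow.mk (pullbackLiftMapApp P δ t)) where
  i := appToPullbackLiftMapApp hεδ ht hc₂ hc₃
  r := pullbackLiftMapAppToApp P δ s t
  retract := by
    ext
    · simp [appToPullbackLiftMapApp, pullbackLiftMapAppToApp, hc₁]
    · simp only [appToPullbackLiftMapApp, pullbackLiftMapAppToApp, Arrow.comp_right,
        Arrow.homMk_right, Arrow.id_right]
      erw [pullback.lift_snd_assoc]
      exact hs

end CategoryTheory

open CategoryTheory

/-- Let `E` have pullbacks, let `P` be an endofunctor with `ε : 𝟭 ⟶ P`,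
`δ : P ⟶ 𝟭` satisfying `δ ∘ ε = id`, and let `(s, t : R ⟶ X, r)` be a reflexive relation on
`X` admitting a `δ`-contractor `c`.  Form the pullback `P X ×_X R` of `δ_X` along `t`.  Then
`δ_X : P X ⟶ X` is a retract, in the arrow category of `E`, of the canonical morphism
`⟨P t, δ_R⟩ : P R ⟶ P X ×_X R`; in particular the square from `⟨P t, δ_R⟩` to `δ_X` with
components `P s` and `s ∘ pr_R` is a split epimorphism in the arrow category. -/
theorem delta_contractor_retract
    {E : Type*} [Category E] [HasPullbacks E]
    (P : E ⥤ E) (ε : 𝟭 E ⟶ P) (δ : P ⟶ 𝟭 E) (hεδ : ε ≫ δ = 𝟙 (𝟭 E))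
    {R X : E} (s t : R ⟶ X) (r : X ⟶ R)
    (hs : r ≫ s = 𝟙 X) (ht : r ≫ t = 𝟙 X)
    (c : P.obj X ⟶ P.obj R)
    (hc₁ : c ≫ P.map s = 𝟙 (P.obj X))
    (hc₂ : c ≫ P.map t = δ.app X ≫ ε.app X)
    (hc₃ : c ≫ δ.app R = δ.app X ≫ r) :
    (∃ (i : Arrow.mk (δ.app X) ⟶
          Arrow.mk (pullback.lift (P.map t) (δ.app R) (by simp) :
            P.obj R ⟶ pullback (δ.app X) t))
        (p : Arrow.mk (pullback.lift (P.map t) (δ.app R) (by simp) :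
            P.obj R ⟶ pullback (δ.app X) t) ⟶ Arrow.mk (δ.app X)),
        i ≫ p = 𝟙 (Arrow.mk (δ.app X))) ∧
      IsSplitEpi
        (Arrow.homMk
          (u := P.map s) (v := pullback.snd (δ.app X) t ≫ s)
          (by simp; erw [pullback.lift_snd_assoc]) :
          Arrow.mk (pullback.lift (P.map t) (δ.app R) (by simp) :
            P.obj R ⟶ pullback (δ.app X) t) ⟶ Arrow.mk (δ.app X)) := by
  let h := retractPullbackLiftMapApp hεδ ht hc₂ hc₃ hs hc₁
  exact ⟨⟨h.i, h.r, h.retract⟩, ⟨⟨h.splitEpi⟩⟩⟩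
end

section
/- Let k : C ⥤ D be a functor between small categories, and let ι_C : C ⥤ 1 ⋆ C and ι_D : D ⥤ 1 ⋆ D denote the inclusions into the joins with the terminal category. Then the Beck–Chevalley natural transformation k_! ∘ ι_C* ⟶ ι_D* ∘ (1 ⋆ k)_! between functors from presheaves on 1 ⋆ C to presheaves on D is an isomorphism, where for a functor u, u_! denotes left Kan extension of presheaves along u and u* denotes restriction of presheaves along u. -/
/-!
The square formed by `incl : C ⥤ WithInitial C`, `k`, `WithInitial.map k` and
`incl : D ⥤ WithInitial D` is Guitart exact: a morphism `incl d ⟶ (map k).obj Y` forces `Y` to lie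
in `C`, because nothing maps from an object of `D` to the added initial object. Hence so is its
opposite, and the base change morphism for left Kan extensions along a Guitart exact square is an
isomorphism; this base change morphism is the mate of the square of restriction functors.
-/

open CategoryTheory Functor

universe u

namespace CategoryTheory.TwoSquare

variable {C₁ C₂ C₃ C₄ : Type*} [Category C₁] [Category C₂] [Category C₃] [Category C₄]
  {T : C₁ ⥤ C₂} {L : C₁ ⥤ C₃} {R : C₂ ⥤ C₄} {B : C₃ ⥤ C₄}

abbrev whiskeringLeft (w : TwoSquare T L R B) (E : Type*) [Category E] :
    TwoSquare ((Functor.whiskeringLeft C₂ C₄ E).obj R) ((Functor.whiskeringLeft C₃ C₄ E).obj B)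
      ((Functor.whiskeringLeft C₁ C₂ E).obj T) ((Functor.whiskeringLeft C₁ C₃ E).obj L) :=
  (Functor.whiskeringLeft C₁ C₄ E).map w.natTrans

lemma lanBaseChange_eq_mateEquiv_symm (w : TwoSquare T L R B) (E : Type*) [Category E]
    [∀ F : C₁ ⥤ E, L.HasLeftKanExtension F] [∀ F : C₂ ⥤ E, R.HasLeftKanExtension F] :
    w.lanBaseChange (D := E) =
      (mateEquiv (R.lanAdjunction E) (L.lanAdjunction E)).symm (w.whiskeringLeft E) := by
  ext F : 2
  apply hom_ext_of_isLeftKanExtension _ (L.lanUnit.app (T ⋙ F))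
  have hmate := unit_mateEquiv_symm (R.lanAdjunction E) (L.lanAdjunction E) (w.whiskeringLeft E) F
  rw [lanAdjunction_unit, lanAdjunction_unit] at hmate
  refine Eq.trans ?_ hmate
  rw [lanBaseChange_app, ← lanAdjunction_unit]
  erw [← Adjunction.homEquiv_unit, Equiv.apply_symm_apply]
  ext X
  simp only [id_obj, comp_obj, whiskeringLeft_obj_obj, LeftExtension.mk_hom, NatTrans.comp_app,
    associator_inv_app, Functor.whiskerRight_app, associator_hom_app, Category.comp_id,
    Category.id_comp, whiskeringLeft_obj_map, Functor.whiskerLeft_app, whiskeringLeft_map_app_app]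
  rfl

end CategoryTheory.TwoSquare

namespace CategoryTheory.WithInitial

variable {C D : Type*} [Category C] [Category D] (k : C ⥤ D)

def inclMapSquare : TwoSquare k incl incl (map k) := 𝟙 (k ⋙ incl)

instance essSurj_pre_incl_map (d : D) :
    (StructuredArrow.pre (incl.obj d) incl (map k)).EssSurj where
  mem_essImage f := by
    obtain ⟨⟨⟩, Y, f⟩ := f
    cases Y with
    | star => exact (false_of_to_star f).elim
    | of c => exact ⟨StructuredArrow.mk (Y := c) f, ⟨Iso.refl _⟩⟩

instance guitartExact_inclMapSquare : (inclMapSquare k).GuitartExact := by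
  rw [TwoSquare.guitartExact_iff_initial]
  intro d
  -- `structuredArrowDownwards d` is `post ⋙ mapRight ⋙ pre`, and each factor is an equivalence.
  have : (Comma.mapRight (fromPUnit (incl.obj d)) (inclMapSquare k)).IsEquivalence :=
    (Comma.mapRightIso _ (Iso.refl (k ⋙ incl))).isEquivalence_functor
  have : (StructuredArrow.pre (incl.obj d) incl (map k)).IsEquivalence := {}
  dsimp only [TwoSquare.structuredArrowDownwards]
  infer_instance

lemma inclMapSquare_op_whiskeringLeft (E : Type*) [Category E] :
    (inclMapSquare k).op.whiskeringLeft E = 𝟙 _ := by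
  ext F X : 3
  exact F.map_id _

end CategoryTheory.WithInitial

/-- Let `k : C ⥤ D` be a functor between small categories and let
`ι_C : C ⥤ 1 ⋆ C`, `ι_D : D ⥤ 1 ⋆ D` be the inclusions into the joins with the terminal
category (realized as `WithInitial C`, `WithInitial D`).  Then the Beck–Chevalley natural
transformation `k_! ∘ ι_C* ⟶ ι_D* ∘ (1 ⋆ k)_!` — the mate, under the Kan extension
adjunctions `u_! ⊣ u*`, of the canonical identification `(1 ⋆ k)* ∘ ι_C* = ι_D* ∘ k*` — is an
isomorphism of functors from presheaves on `1 ⋆ C` to presheaves on `D`. -/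
theorem beckChevalley_withInitial_isIso
    {C D : Type u} [SmallCategory C] [SmallCategory D] (k : C ⥤ D) :
    IsIso
      ((mateEquiv
          (G := (Functor.whiskeringLeft Cᵒᵖ (WithInitial C)ᵒᵖ (Type u)).obj
            (WithInitial.incl (C := C)).op)
          (H := (Functor.whiskeringLeft Dᵒᵖ (WithInitial D)ᵒᵖ (Type u)).obj
            (WithInitial.incl (C := D)).op)
          ((WithInitial.map k).op.lanAdjunction (Type u))
          (k.op.lanAdjunction (Type u))).symm
        (TwoSquare.mk _ _ _ _ <| 𝟙 ((Functor.whiskeringLeft (WithInitial C)ᵒᵖ (WithInitial D)ᵒᵖ (Type u)).obj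
              (WithInitial.map k).op ⋙
            (Functor.whiskeringLeft Cᵒᵖ (WithInitial C)ᵒᵖ (Type u)).obj
              (WithInitial.incl (C := C)).op))) := by
  have h : IsIso ((WithInitial.inclMapSquare k).op.lanBaseChange (D := Type u)) := inferInstance
  rwa [TwoSquare.lanBaseChange_eq_mateEquiv_symm, WithInitial.inclMapSquare_op_whiskeringLeft] at h
end
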